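/- arXiv:2109.01433 — 3 statements merged into one kernel-verified Lean document; each statement's English description precedes it below -/
import Mathlib

section
/- Under the noise model Y = f(X) + ε, suppose for each x ∈ S×C the map ω_F ↦ f̂(ω_F, x) is square-integrable with respect to P_F, and all integrands below are integrable with respect to P ⊗ P_F. Then the expected L2-loss PFI over the model distribution satisfies ∫∫ [(Y − f̂(ω_F, (X̃_S, X_C)))² − (Y − f̂(ω_F, X))²] d(P ⊗ P_F) = E[(f(X) − m(X̃_S, X_C))²] − E[(f(X) − m(X))²] + E[v(X̃_S, X_C)] − E[v(X)]. -/
/-!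
Averaging over the learning randomness first, the pointwise bias–variance decomposition
`E_F[(y - f̂(·, x))²] = (y - m x)² + v x` turns each expected loss into an expected squared
bias plus an expected model variance. Writing `Y = f(X) + ε`, the difference of the two squared
biases picks up the cross term `2 ε (m(X) - m(X̃_S, X_C))`, which integrates to zero because `ε`
is centred and independent of `(X_S, X_C, X̃_S)`.
-/

open MeasureTheory ProbabilityTheory

section BiasVariance

variable {Ω : Type*} [MeasurableSpace Ω] {μ : Measure Ω} [IsProbabilityMeasure μ]

lemma integral_const_sub_sq {g : Ω → ℝ} (hg : MemLp g 2 μ) (c : ℝ) :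
    ∫ ω, (c - g ω) ^ 2 ∂μ = (c - ∫ ω, g ω ∂μ) ^ 2 + Var[g; μ] := by
  have hcg : MemLp (fun ω => c - g ω) 2 μ := (memLp_const c).sub hg
  rw [← variance_const_sub hg.aestronglyMeasurable c, variance_eq_sub hcg,
    integral_sub (integrable_const c) (hg.integrable one_le_two), integral_const]
  simp

end BiasVariance

section ModelDistribution

variable {Ω ΩF α : Type*} [MeasurableSpace Ω] [MeasurableSpace ΩF]
  {P : Measure Ω} {PF : Measure ΩF} [IsProbabilityMeasure PF]
  {g : ΩF × α → ℝ} (hg : ∀ x, MemLp (fun ωF => g (ωF, x)) 2 PF) {m v : α → ℝ}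
  (hm : ∀ x, m x = ∫ ωF, g (ωF, x) ∂PF)
  (hv : ∀ x, v x = ∫ ωF, (g (ωF, x) - m x) ^ 2 ∂PF)
  {a : Ω → ℝ} {x : Ω → α}

include hg hm hv

lemma integral_sq_sub_model (y : ℝ) (x : α) :
    ∫ ωF, (y - g (ωF, x)) ^ 2 ∂PF = (y - m x) ^ 2 + v x := by
  rw [integral_const_sub_sq (hg x), variance_eq_integral (hg x).aemeasurable, hv, hm]

lemma integrable_sq_sub_mean_model
    (hint : Integrable (fun p : Ω × ΩF => (a p.1 - g (p.2, x p.1)) ^ 2) (P.prod PF))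
    (hvx : Integrable (fun ω => v (x ω)) P) :
    Integrable (fun ω => (a ω - m (x ω)) ^ 2) P := by
  have hsum : Integrable (fun ω => (a ω - m (x ω)) ^ 2 + v (x ω)) P := by
    simpa only [integral_sq_sub_model hg hm hv] using hint.integral_prod_left
  refine (hsum.sub hvx).congr (ae_of_all _ fun ω => ?_)
  simp

lemma integral_prod_sq_sub_model [SFinite P]
    (hint : Integrable (fun p : Ω × ΩF => (a p.1 - g (p.2, x p.1)) ^ 2) (P.prod PF))
    (hvx : Integrable (fun ω => v (x ω)) P) :
    ∫ p, (a p.1 - g (p.2, x p.1)) ^ 2 ∂(P.prod PF)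
      = ∫ ω, (a ω - m (x ω)) ^ 2 ∂P + ∫ ω, v (x ω) ∂P := by
  rw [integral_prod _ hint, ← integral_add (integrable_sq_sub_mean_model hg hm hv hint hvx) hvx]
  simp only [integral_sq_sub_model hg hm hv]

end ModelDistribution

section Noise

variable {Ω : Type*} [MeasurableSpace Ω] {P : Measure Ω}

lemma ProbabilityTheory.IndepFun.integral_mul_comp_eq_zero {β : Type*} [MeasurableSpace β]
    {ε : Ω → ℝ} {Z : Ω → β} (hInd : IndepFun ε Z P) (hε : AEStronglyMeasurable ε P)
    (hZ : AEMeasurable Z P)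
    (hmean : ∫ ω, ε ω ∂P = 0) {h : β → ℝ} (hh : Measurable h) :
    ∫ ω, ε ω * h (Z ω) ∂P = 0 := by
  refine ((hInd.comp measurable_id hh).integral_fun_mul_eq_mul_integral hε
    (hh.comp_aemeasurable hZ).aestronglyMeasurable).trans ?_
  simp [hmean]

lemma integral_sq_sub_sub_integral_sq_sub_of_noise {Y f ε a b : Ω → ℝ}
    (hY : ∀ ω, Y ω = f ω + ε ω)
    (ha : Integrable (fun ω => (Y ω - a ω) ^ 2) P)
    (hb : Integrable (fun ω => (Y ω - b ω) ^ 2) P)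
    (hfa : Integrable (fun ω => (f ω - a ω) ^ 2) P)
    (hfb : Integrable (fun ω => (f ω - b ω) ^ 2) P)
    (hcross : ∫ ω, ε ω * (b ω - a ω) ∂P = 0) :
    ∫ ω, (Y ω - a ω) ^ 2 ∂P - ∫ ω, (Y ω - b ω) ^ 2 ∂P
      = ∫ ω, (f ω - a ω) ^ 2 ∂P - ∫ ω, (f ω - b ω) ^ 2 ∂P := by
  have hexpand : ∀ ω, (Y ω - a ω) ^ 2 - (Y ω - b ω) ^ 2
      = ((f ω - a ω) ^ 2 - (f ω - b ω) ^ 2) + 2 * (ε ω * (b ω - a ω)) := fun ω => by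
    rw [hY]; ring
  have hcross_int : Integrable (fun ω => 2 * (ε ω * (b ω - a ω))) P := by
    refine ((ha.sub hb).sub (hfa.sub hfb)).congr (ae_of_all _ fun ω => ?_)
    simp only [Pi.sub_apply, hexpand]
    ring
  rw [← integral_sub ha hb, ← integral_sub hfa hfb]
  simp only [hexpand]
  rw [integral_add (f := fun ω => (f ω - a ω) ^ 2 - (f ω - b ω) ^ 2) (hfa.sub hfb) hcross_int,
    integral_const_mul, hcross, mul_zero, add_zero]

end Noise

theorem stmt_7_general
    {Ω S C ΩF : Type*} [MeasurableSpace Ω] [MeasurableSpace S] [MeasurableSpace C]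
    [MeasurableSpace ΩF]
    (P : Measure Ω) [IsProbabilityMeasure P]
    (PF : Measure ΩF) [IsProbabilityMeasure PF]
    (XS : Ω → S) (XC : Ω → C) (XtS : Ω → S) (Y : Ω → ℝ) (ε : Ω → ℝ)
    (hXS : Measurable XS) (hXC : Measurable XC) (hXtS : Measurable XtS)
    (hε : Measurable ε)
    (f : S × C → ℝ)
    (hDGP : ∀ ω, Y ω = f (XS ω, XC ω) + ε ω)
    (hIndep : IndepFun ε (fun ω => (XS ω, XC ω, XtS ω)) P)
    (hεmean : ∫ ω, ε ω ∂P = 0)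
    (fhat : ΩF × (S × C) → ℝ) (hfhat : Measurable fhat)
    (hfhat2 : ∀ x : S × C, MemLp (fun ωF => fhat (ωF, x)) 2 PF)
    (m v : S × C → ℝ)
    (hm : ∀ x, m x = ∫ ωF, fhat (ωF, x) ∂PF)
    (hv : ∀ x, v x = ∫ ωF, (fhat (ωF, x) - m x) ^ 2 ∂PF)
    (hIntPerm : Integrable (fun p : Ω × ΩF =>
      (Y p.1 - fhat (p.2, (XtS p.1, XC p.1))) ^ 2) (P.prod PF))
    (hIntOrig : Integrable (fun p : Ω × ΩF =>
      (Y p.1 - fhat (p.2, (XS p.1, XC p.1))) ^ 2) (P.prod PF))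
    (hIntBiasPerm : Integrable (fun ω => (f (XS ω, XC ω) - m (XtS ω, XC ω)) ^ 2) P)
    (hIntBiasOrig : Integrable (fun ω => (f (XS ω, XC ω) - m (XS ω, XC ω)) ^ 2) P)
    (hIntVarPerm : Integrable (fun ω => v (XtS ω, XC ω)) P)
    (hIntVarOrig : Integrable (fun ω => v (XS ω, XC ω)) P) :
    ∫ p : Ω × ΩF, ((Y p.1 - fhat (p.2, (XtS p.1, XC p.1))) ^ 2
        - (Y p.1 - fhat (p.2, (XS p.1, XC p.1))) ^ 2) ∂(P.prod PF)
      = (∫ ω, (f (XS ω, XC ω) - m (XtS ω, XC ω)) ^ 2 ∂P)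
        - (∫ ω, (f (XS ω, XC ω) - m (XS ω, XC ω)) ^ 2 ∂P)
        + (∫ ω, v (XtS ω, XC ω) ∂P)
        - ∫ ω, v (XS ω, XC ω) ∂P := by
  have hm_meas : Measurable m := by
    rw [funext hm]
    exact hfhat.stronglyMeasurable.integral_prod_left'.measurable
  have hcross : ∫ ω, ε ω * (m (XS ω, XC ω) - m (XtS ω, XC ω)) ∂P = 0 :=
    hIndep.integral_mul_comp_eq_zero hε.aestronglyMeasurable
      (hXS.prodMk (hXC.prodMk hXtS)).aemeasurable hεmean
      (h := fun w : S × C × S => m (w.1, w.2.1) - m (w.2.2, w.2.1)) (by fun_prop)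
  rw [integral_sub hIntPerm hIntOrig,
    integral_prod_sq_sub_model hfhat2 hm hv hIntPerm hIntVarPerm,
    integral_prod_sq_sub_model hfhat2 hm hv hIntOrig hIntVarOrig]
  have hbias := integral_sq_sub_sub_integral_sq_sub_of_noise
    (f := fun ω => f (XS ω, XC ω)) (a := fun ω => m (XtS ω, XC ω))
    (b := fun ω => m (XS ω, XC ω))
    hDGP (integrable_sq_sub_mean_model hfhat2 hm hv hIntPerm hIntVarPerm)
    (integrable_sq_sub_mean_model hfhat2 hm hv hIntOrig hIntVarOrig)
    hIntBiasPerm hIntBiasOrig hcross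
  linarith

/-- **Decomposition of the expected L2-loss PFI over the model distribution.** Under the
noise model `Y = f(X) + ε`, with square-integrable `f̂(·, x)` and integrable integrands,
`∫∫ [(Y − f̂(ω_F,(X̃_S,X_C)))² − (Y − f̂(ω_F,X))²] d(P ⊗ P_F)
  = E[(f(X) − m(X̃_S,X_C))²] − E[(f(X) − m(X))²] + E[v(X̃_S,X_C)] − E[v(X)]`. -/
theorem stmt_7
    {Ω S C ΩF : Type*} [MeasurableSpace Ω] [MeasurableSpace S] [MeasurableSpace C]
    [MeasurableSpace ΩF]
    (P : Measure Ω) [IsProbabilityMeasure P]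
    (PF : Measure ΩF) [IsProbabilityMeasure PF]
    (XS : Ω → S) (XC : Ω → C) (XtS : Ω → S) (Y : Ω → ℝ) (ε : Ω → ℝ)
    (hXS : Measurable XS) (hXC : Measurable XC) (hXtS : Measurable XtS)
    (hε : Measurable ε)
    (f : S × C → ℝ) (hf : Measurable f)
    (hDGP : ∀ ω, Y ω = f (XS ω, XC ω) + ε ω)
    (hIndep : IndepFun ε (fun ω => (XS ω, XC ω, XtS ω)) P)
    (hε2 : MemLp ε 2 P)
    (hεmean : ∫ ω, ε ω ∂P = 0)
    (σ : ℝ) (hεvar : variance ε P = σ ^ 2)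
    (fhat : ΩF × (S × C) → ℝ) (hfhat : Measurable fhat)
    (hfhat2 : ∀ x : S × C, MemLp (fun ωF => fhat (ωF, x)) 2 PF)
    (m v : S × C → ℝ)
    (hm : ∀ x, m x = ∫ ωF, fhat (ωF, x) ∂PF)
    (hv : ∀ x, v x = ∫ ωF, (fhat (ωF, x) - m x) ^ 2 ∂PF)
    (hIntPerm : Integrable (fun p : Ω × ΩF =>
      (Y p.1 - fhat (p.2, (XtS p.1, XC p.1))) ^ 2) (P.prod PF))
    (hIntOrig : Integrable (fun p : Ω × ΩF =>
      (Y p.1 - fhat (p.2, (XS p.1, XC p.1))) ^ 2) (P.prod PF))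
    (hIntBiasPerm : Integrable (fun ω => (f (XS ω, XC ω) - m (XtS ω, XC ω)) ^ 2) P)
    (hIntBiasOrig : Integrable (fun ω => (f (XS ω, XC ω) - m (XS ω, XC ω)) ^ 2) P)
    (hIntVarPerm : Integrable (fun ω => v (XtS ω, XC ω)) P)
    (hIntVarOrig : Integrable (fun ω => v (XS ω, XC ω)) P) :
    ∫ p : Ω × ΩF, ((Y p.1 - fhat (p.2, (XtS p.1, XC p.1))) ^ 2
        - (Y p.1 - fhat (p.2, (XS p.1, XC p.1))) ^ 2) ∂(P.prod PF)
      = (∫ ω, (f (XS ω, XC ω) - m (XtS ω, XC ω)) ^ 2 ∂P)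
        - (∫ ω, (f (XS ω, XC ω) - m (XS ω, XC ω)) ^ 2 ∂P)
        + (∫ ω, v (XtS ω, XC ω) ∂P)
        - ∫ ω, v (XS ω, XC ω) ∂P :=
  stmt_7_general P PF XS XC XtS Y ε hXS hXC hXtS hε f hDGP hIndep hεmean fhat hfhat hfhat2 m v hm hv
    hIntPerm hIntOrig hIntBiasPerm hIntBiasOrig hIntVarPerm hIntVarOrig
end

section
/- Under the noise model Y = f(X) + ε, suppose for each x ∈ S×C the map ω_F ↦ f̂(ω_F, x) is square-integrable with respect to P_F, and all integrands below are integrable with respect to P ⊗ P_F. Then the bias of the expected model-PFI relative to the DGP-PFI is ∫∫ [(Y − f̂(ω_F,(X̃_S,X_C)))² − (Y − f̂(ω_F,X))²] d(P⊗P_F) − PFI_f = E[(f(X) − m(X̃_S,X_C))² − (f(X) − f(X̃_S,X_C))²] − E[(f(X) − m(X))²] + (E[v(X̃_S,X_C)] − E[v(X)]), i.e., permutation loss bias, minus squared model bias, plus variance inflation. -/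
/-!
Integrating out the learner first, the expected loss at a fixed `ω` splits pointwise as
`(Y − m)² + v` (bias–variance decomposition in `L²(P_F)`). Since `ε` is centred and independent
of `(X_S, X_C, X̃_S)`, it is orthogonal in `L²(P)` to every square-integrable function of these,
so each of the four expected losses is its noise-free counterpart plus `E[ε²]`, and the noise
terms cancel in the difference.
-/

open MeasureTheory ProbabilityTheory

section
variable {α : Type*} [MeasurableSpace α] {μ : Measure α}

theorem integral_add_sq_of_integral_mul_eq_zero {a b : α → ℝ} (ha : MemLp a 2 μ)
    (hb : MemLp b 2 μ) (hab : ∫ x, a x * b x ∂μ = 0) :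
    ∫ x, (a x + b x) ^ 2 ∂μ = ∫ x, a x ^ 2 ∂μ + ∫ x, b x ^ 2 ∂μ := by
  have hab_int : Integrable (fun x => 2 * (a x * b x)) μ := (ha.integrable_mul hb).const_mul 2
  calc ∫ x, (a x + b x) ^ 2 ∂μ = ∫ x, (a x ^ 2 + 2 * (a x * b x) + b x ^ 2) ∂μ := by
        congr 1 with x; ring
    _ = ∫ x, a x ^ 2 ∂μ + ∫ x, b x ^ 2 ∂μ := by
        rw [integral_add (ha.integrable_sq.fun_add hab_int) hb.integrable_sq,
          integral_add ha.integrable_sq hab_int, integral_const_mul, hab, mul_zero, add_zero]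

theorem ProbabilityTheory.IndepFun.integral_add_sq {U ε : α → ℝ} (hUε : IndepFun U ε μ)
    (hU : MemLp U 2 μ) (hε : MemLp ε 2 μ) (hε_mean : ∫ x, ε x ∂μ = 0) :
    ∫ x, (U x + ε x) ^ 2 ∂μ = ∫ x, U x ^ 2 ∂μ + ∫ x, ε x ^ 2 ∂μ := by
  refine integral_add_sq_of_integral_mul_eq_zero hU hε ?_
  rw [hUε.integral_fun_mul_eq_mul_integral hU.aestronglyMeasurable hε.aestronglyMeasurable,
    hε_mean, mul_zero]

theorem integral_sub_sq_eq_sq_sub_integral_add [IsProbabilityMeasure μ] (c : ℝ) {g : α → ℝ}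
    (hg : MemLp g 2 μ) :
    ∫ x, (c - g x) ^ 2 ∂μ = (c - ∫ x, g x ∂μ) ^ 2 + ∫ x, (g x - ∫ y, g y ∂μ) ^ 2 ∂μ := by
  set M := ∫ x, g x ∂μ
  have hg_int : Integrable g μ := hg.integrable one_le_two
  have hcentered : MemLp (fun x => M - g x) 2 μ := (memLp_const M).sub hg
  have hcross : ∫ x, (c - M) * (M - g x) ∂μ = 0 := by
    rw [integral_const_mul, integral_sub (integrable_const M) hg_int, integral_const]
    simp [M]
  calc ∫ x, (c - g x) ^ 2 ∂μ = ∫ x, ((c - M) + (M - g x)) ^ 2 ∂μ := by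
        congr 1 with x; ring
    _ = (c - M) ^ 2 + ∫ x, (g x - M) ^ 2 ∂μ := by
        rw [integral_add_sq_of_integral_mul_eq_zero (memLp_const _) hcentered hcross]
        simp only [integral_const, probReal_univ, one_smul]
        congr 1
        congr 1 with x; ring

end

theorem integral_prod_sub_sq_eq {Ω ΩF X : Type*} [MeasurableSpace Ω] [MeasurableSpace ΩF]
    {P : Measure Ω} [SFinite P] {PF : Measure ΩF} [IsProbabilityMeasure PF]
    (Y : Ω → ℝ) (Z : Ω → X) (fhat : ΩF × X → ℝ) (m v : X → ℝ)
    (hfhat2 : ∀ x, MemLp (fun ωF => fhat (ωF, x)) 2 PF)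
    (hm : ∀ x, m x = ∫ ωF, fhat (ωF, x) ∂PF)
    (hv : ∀ x, v x = ∫ ωF, (fhat (ωF, x) - m x) ^ 2 ∂PF)
    (hint : Integrable (fun p : Ω × ΩF => (Y p.1 - fhat (p.2, Z p.1)) ^ 2) (P.prod PF))
    (hvZ : Integrable (fun ω => v (Z ω)) P) :
    ∫ p, (Y p.1 - fhat (p.2, Z p.1)) ^ 2 ∂(P.prod PF)
      = ∫ ω, (Y ω - m (Z ω)) ^ 2 ∂P + ∫ ω, v (Z ω) ∂P := by
  have inner (ω : Ω) :
      ∫ ωF, (Y ω - fhat (ωF, Z ω)) ^ 2 ∂PF = (Y ω - m (Z ω)) ^ 2 + v (Z ω) := by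
    rw [hv, hm]
    exact integral_sub_sq_eq_sq_sub_integral_add (Y ω) (hfhat2 _)
  have hbias : Integrable (fun ω => (Y ω - m (Z ω)) ^ 2) P :=
    (integrable_add_iff_integrable_left' hvZ).mp
      (by simpa only [inner] using hint.integral_prod_left)
  rw [integral_prod _ hint, ← integral_add hbias hvZ]
  simp only [inner]

theorem stmt_9_general
    {Ω S C ΩF : Type*} [MeasurableSpace Ω] [MeasurableSpace S] [MeasurableSpace C]
    [MeasurableSpace ΩF]
    (P : Measure Ω) [IsProbabilityMeasure P]
    (PF : Measure ΩF) [IsProbabilityMeasure PF]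
    (XS : Ω → S) (XC : Ω → C) (XtS : Ω → S) (Y : Ω → ℝ) (ε : Ω → ℝ)
    (hXS : Measurable XS) (hXC : Measurable XC) (hXtS : Measurable XtS)
    (f : S × C → ℝ) (hf : Measurable f)
    (hDGP : ∀ ω, Y ω = f (XS ω, XC ω) + ε ω)
    (hIndep : IndepFun ε (fun ω => (XS ω, XC ω, XtS ω)) P)
    (hε2 : MemLp ε 2 P)
    (hεmean : ∫ ω, ε ω ∂P = 0)
    (fhat : ΩF × (S × C) → ℝ) (hfhat : Measurable fhat)
    (hfhat2 : ∀ x : S × C, MemLp (fun ωF => fhat (ωF, x)) 2 PF)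
    (m v : S × C → ℝ)
    (hm : ∀ x, m x = ∫ ωF, fhat (ωF, x) ∂PF)
    (hv : ∀ x, v x = ∫ ωF, (fhat (ωF, x) - m x) ^ 2 ∂PF)
    (hIntPerm : Integrable (fun p : Ω × ΩF =>
      (Y p.1 - fhat (p.2, (XtS p.1, XC p.1))) ^ 2) (P.prod PF))
    (hIntOrig : Integrable (fun p : Ω × ΩF =>
      (Y p.1 - fhat (p.2, (XS p.1, XC p.1))) ^ 2) (P.prod PF))
    (hfX2 : MemLp (fun ω => f (XS ω, XC ω)) 2 P)
    (hfXt2 : MemLp (fun ω => f (XtS ω, XC ω)) 2 P)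
    (hIntPermBias : Integrable (fun ω =>
      (f (XS ω, XC ω) - m (XtS ω, XC ω)) ^ 2
        - (f (XS ω, XC ω) - f (XtS ω, XC ω)) ^ 2) P)
    (hIntBiasOrig : Integrable (fun ω => (f (XS ω, XC ω) - m (XS ω, XC ω)) ^ 2) P)
    (hIntVarPerm : Integrable (fun ω => v (XtS ω, XC ω)) P)
    (hIntVarOrig : Integrable (fun ω => v (XS ω, XC ω)) P) :
    (∫ p : Ω × ΩF, ((Y p.1 - fhat (p.2, (XtS p.1, XC p.1))) ^ 2
        - (Y p.1 - fhat (p.2, (XS p.1, XC p.1))) ^ 2) ∂(P.prod PF))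
      - ((∫ ω, (Y ω - f (XtS ω, XC ω)) ^ 2 ∂P) - ∫ ω, (Y ω - f (XS ω, XC ω)) ^ 2 ∂P)
      = (∫ ω, ((f (XS ω, XC ω) - m (XtS ω, XC ω)) ^ 2
            - (f (XS ω, XC ω) - f (XtS ω, XC ω)) ^ 2) ∂P)
        - (∫ ω, (f (XS ω, XC ω) - m (XS ω, XC ω)) ^ 2 ∂P)
        + ((∫ ω, v (XtS ω, XC ω) ∂P) - ∫ ω, v (XS ω, XC ω) ∂P) := by
  have hm_meas : Measurable m := by
    rw [funext hm]; exact hfhat.stronglyMeasurable.integral_prod_left'.measurable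
  have noise_loss (g : S × C × S → ℝ) (hg : Measurable g)
      (hg2 : MemLp (fun ω => f (XS ω, XC ω) - g (XS ω, XC ω, XtS ω)) 2 P) :
      ∫ ω, (Y ω - g (XS ω, XC ω, XtS ω)) ^ 2 ∂P
        = ∫ ω, (f (XS ω, XC ω) - g (XS ω, XC ω, XtS ω)) ^ 2 ∂P + ∫ ω, ε ω ^ 2 ∂P := by
    simp only [hDGP, add_sub_right_comm _ (ε _)]
    have hindep : IndepFun (fun ω => f (XS ω, XC ω) - g (XS ω, XC ω, XtS ω)) ε P :=
      (hIndep.comp measurable_id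
        (by fun_prop : Measurable fun w : S × C × S => f (w.1, w.2.1) - g w)).symm
    exact hindep.integral_add_sq hg2 hε2 hεmean
  have hperm_dgp_sq : Integrable (fun ω => (f (XS ω, XC ω) - f (XtS ω, XC ω)) ^ 2) P :=
    (hfX2.sub hfXt2).integrable_sq
  have hperm_bias_sq : Integrable (fun ω => (f (XS ω, XC ω) - m (XtS ω, XC ω)) ^ 2) P := by
    simpa only [sub_add_cancel] using hIntPermBias.fun_add hperm_dgp_sq
  rw [integral_sub hIntPerm hIntOrig,
    integral_prod_sub_sq_eq Y _ fhat m v hfhat2 hm hv hIntPerm hIntVarPerm,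
    integral_prod_sub_sq_eq Y _ fhat m v hfhat2 hm hv hIntOrig hIntVarOrig,
    integral_sub hperm_bias_sq hperm_dgp_sq,
    noise_loss (fun w => m (w.2.2, w.2.1)) (by fun_prop)
      ((memLp_two_iff_integrable_sq (by fun_prop)).mpr hperm_bias_sq),
    noise_loss (fun w => m (w.1, w.2.1)) (by fun_prop)
      ((memLp_two_iff_integrable_sq (by fun_prop)).mpr hIntBiasOrig),
    noise_loss (fun w => f (w.2.2, w.2.1)) (by fun_prop) (hfX2.sub hfXt2),
    noise_loss (fun w => f (w.1, w.2.1)) (by fun_prop) (by simp)]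
  simp only [sub_self, zero_pow two_ne_zero, integral_zero]
  ring

/-- **Bias of the expected model-PFI relative to the DGP-PFI (L2 loss).** Under the noise
model `Y = f(X) + ε`, with square-integrable `f̂(·, x)` and integrable integrands,
`∫∫ [(Y − f̂(ω_F,(X̃_S,X_C)))² − (Y − f̂(ω_F,X))²] d(P⊗P_F) − PFI_f
  = E[(f(X) − m(X̃_S,X_C))² − (f(X) − f(X̃_S,X_C))²] − E[(f(X) − m(X))²]
    + (E[v(X̃_S,X_C)] − E[v(X)])`,
i.e. permutation loss bias, minus squared model bias, plus variance inflation, where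
`PFI_f = E[(Y − f(X̃_S,X_C))²] − E[(Y − f(X))²]`. -/
theorem stmt_9
    {Ω S C ΩF : Type*} [MeasurableSpace Ω] [MeasurableSpace S] [MeasurableSpace C]
    [MeasurableSpace ΩF]
    (P : Measure Ω) [IsProbabilityMeasure P]
    (PF : Measure ΩF) [IsProbabilityMeasure PF]
    (XS : Ω → S) (XC : Ω → C) (XtS : Ω → S) (Y : Ω → ℝ) (ε : Ω → ℝ)
    (hXS : Measurable XS) (hXC : Measurable XC) (hXtS : Measurable XtS)
    (hε : Measurable ε)
    (f : S × C → ℝ) (hf : Measurable f)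
    (hDGP : ∀ ω, Y ω = f (XS ω, XC ω) + ε ω)
    (hIndep : IndepFun ε (fun ω => (XS ω, XC ω, XtS ω)) P)
    (hε2 : MemLp ε 2 P)
    (hεmean : ∫ ω, ε ω ∂P = 0)
    (σ : ℝ) (hεvar : variance ε P = σ ^ 2)
    (fhat : ΩF × (S × C) → ℝ) (hfhat : Measurable fhat)
    (hfhat2 : ∀ x : S × C, MemLp (fun ωF => fhat (ωF, x)) 2 PF)
    (m v : S × C → ℝ)
    (hm : ∀ x, m x = ∫ ωF, fhat (ωF, x) ∂PF)
    (hv : ∀ x, v x = ∫ ωF, (fhat (ωF, x) - m x) ^ 2 ∂PF)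
    (hIntPerm : Integrable (fun p : Ω × ΩF =>
      (Y p.1 - fhat (p.2, (XtS p.1, XC p.1))) ^ 2) (P.prod PF))
    (hIntOrig : Integrable (fun p : Ω × ΩF =>
      (Y p.1 - fhat (p.2, (XS p.1, XC p.1))) ^ 2) (P.prod PF))
    (hfX2 : MemLp (fun ω => f (XS ω, XC ω)) 2 P)
    (hfXt2 : MemLp (fun ω => f (XtS ω, XC ω)) 2 P)
    (hIntPermBias : Integrable (fun ω =>
      (f (XS ω, XC ω) - m (XtS ω, XC ω)) ^ 2
        - (f (XS ω, XC ω) - f (XtS ω, XC ω)) ^ 2) P)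
    (hIntBiasOrig : Integrable (fun ω => (f (XS ω, XC ω) - m (XS ω, XC ω)) ^ 2) P)
    (hIntVarPerm : Integrable (fun ω => v (XtS ω, XC ω)) P)
    (hIntVarOrig : Integrable (fun ω => v (XS ω, XC ω)) P) :
    (∫ p : Ω × ΩF, ((Y p.1 - fhat (p.2, (XtS p.1, XC p.1))) ^ 2
        - (Y p.1 - fhat (p.2, (XS p.1, XC p.1))) ^ 2) ∂(P.prod PF))
      - ((∫ ω, (Y ω - f (XtS ω, XC ω)) ^ 2 ∂P) - ∫ ω, (Y ω - f (XS ω, XC ω)) ^ 2 ∂P)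
      = (∫ ω, ((f (XS ω, XC ω) - m (XtS ω, XC ω)) ^ 2
            - (f (XS ω, XC ω) - f (XtS ω, XC ω)) ^ 2) ∂P)
        - (∫ ω, (f (XS ω, XC ω) - m (XS ω, XC ω)) ^ 2 ∂P)
        + ((∫ ω, v (XtS ω, XC ω) ∂P) - ∫ ω, v (XS ω, XC ω) ∂P) :=
  stmt_9_general P PF XS XC XtS Y ε hXS hXC hXtS f hf hDGP hIndep hε2 hεmean fhat hfhat hfhat2 m v
    hm hv hIntPerm hIntOrig hfX2 hfXt2 hIntPermBias hIntBiasOrig hIntVarPerm hIntVarOrig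
end

section
/- Let f̂ : S×C → ℝ be a fixed measurable model. Assume Y, f(X), f̂(X), f(X̃_S,X_C) and f̂(X̃_S,X_C) are square-integrable, f∘X is a version of the conditional expectation E[Y | σ(X_S, X_C)], (X̃_S, X_C) has the same joint law as (X_S, X_C), and Y and X̃_S are conditionally independent given σ(X_C). Then the difference between the conditional DGP-PFI and the conditional model-PFI equals twice the expected conditional excess variance: PFI_f − PFI_{f̂} = 2 E[ (E[f(X)² | σ(X_C)] − (E[f(X) | σ(X_C)])²) − (E[f(X)·f̂(X) | σ(X_C)] − E[f(X) | σ(X_C)]·E[f̂(X) | σ(X_C)]) ], i.e., PFI_f − PFI_{f̂} = 2 E_{X_C}[Var_{X_S|X_C}[f] − Cov_{X_S|X_C}[f, f̂]]. -/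
/-!
Expanding the squares and using that `(X̃_S, X_C)` and `(X_S, X_C)` have the same law,
`PFI_g = 2 (E[Y g(X)] - E[Y g(X̃_S, X_C)])`. Since `f(X) = E[Y | X]`, the first term is
`E[f(X) g(X)]`. Conditional independence of `Y` and `X̃_S` given `X_C` means
`E[Y | σ(X̃_S) ⊔ σ(X_C)] = E[Y | X_C]`, so the second term is
`E[E[Y | X_C] E[g(X̃_S, X_C) | X_C]] = E[E[f(X) | X_C] E[g(X) | X_C]]`.
Subtracting the identities for `g = f` and `g = f̂` gives the claim.
-/

open MeasureTheory ProbabilityTheory MeasurableSpace Set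

section PiSystem

variable {Ω : Type*}

lemma isPiSystem_inter_measurableSet (m₁ m₂ : MeasurableSpace Ω) :
    IsPiSystem {s | ∃ t₁ t₂, MeasurableSet[m₁] t₁ ∧ MeasurableSet[m₂] t₂ ∧ t₁ ∩ t₂ = s} := by
  rintro _ ⟨t₁, t₂, ht₁, ht₂, rfl⟩ _ ⟨u₁, u₂, hu₁, hu₂, rfl⟩ -
  exact ⟨t₁ ∩ u₁, t₂ ∩ u₂, ht₁.inter hu₁, ht₂.inter hu₂, inter_inter_inter_comm _ _ _ _⟩

lemma sup_eq_generateFrom_inter (m₁ m₂ : MeasurableSpace Ω) :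
    m₁ ⊔ m₂ =
      generateFrom {s | ∃ t₁ t₂, MeasurableSet[m₁] t₁ ∧ MeasurableSet[m₂] t₂ ∧ t₁ ∩ t₂ = s} := by
  refine le_antisymm (sup_le ?_ ?_) (generateFrom_le ?_)
  · exact fun t ht => measurableSet_generateFrom ⟨t, univ, ht, .univ, inter_univ t⟩
  · exact fun t ht => measurableSet_generateFrom ⟨univ, t, .univ, ht, univ_inter t⟩
  · rintro _ ⟨t₁, t₂, ht₁, ht₂, rfl⟩
    exact (le_sup_left (b := m₂) _ ht₁).inter (le_sup_right (a := m₁) _ ht₂)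

variable {E : Type*} [NormedAddCommGroup E] [NormedSpace ℝ E] {mΩ : MeasurableSpace Ω}
  {μ : Measure Ω}

lemma setIntegral_eq_of_isPiSystem {m : MeasurableSpace Ω} (hm : m ≤ mΩ) {π : Set (Set Ω)}
    (hgen : m = generateFrom π) (hπ : IsPiSystem π) {f g : Ω → E} (hf : Integrable f μ)
    (hg : Integrable g μ) (hfg : ∫ ω, f ω ∂μ = ∫ ω, g ω ∂μ)
    (h : ∀ s ∈ π, ∫ ω in s, f ω ∂μ = ∫ ω in s, g ω ∂μ) {s : Set Ω} (hs : MeasurableSet[m] s) :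
    ∫ ω in s, f ω ∂μ = ∫ ω in s, g ω ∂μ := by
  induction s, hs using induction_on_inter hgen hπ with
  | empty => simp
  | basic s hs => exact h s hs
  | compl s hs ih =>
    rw [← add_right_inj (∫ ω in s, f ω ∂μ), integral_add_compl (hm s hs) hf, ih,
      integral_add_compl (hm s hs) hg, hfg]
  | iUnion s hdisj hs ih =>
    rw [integral_iUnion (fun i => hm _ (hs i)) hdisj hf.integrableOn,
      integral_iUnion (fun i => hm _ (hs i)) hdisj hg.integrableOn]
    exact tsum_congr ih

end PiSystem

section CondExp

variable {Ω : Type*} {m mΩ : MeasurableSpace Ω} {μ : Measure Ω}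

lemma integral_condExp_mul_of_stronglyMeasurable (hm : m ≤ mΩ) [SigmaFinite (μ.trim hm)]
    {Y Z : Ω → ℝ} (hZ : StronglyMeasurable[m] Z) (hYZ : Integrable (fun ω => Y ω * Z ω) μ)
    (hY : Integrable Y μ) :
    ∫ ω, μ[Y|m] ω * Z ω ∂μ = ∫ ω, Y ω * Z ω ∂μ := by
  rw [← integral_condExp hm (f := fun ω => Y ω * Z ω)]
  exact integral_congr_ae (condExp_mul_of_stronglyMeasurable_right hZ hYZ hY).symm

lemma isClosed_setOf_condExp_ae_eq {m' : MeasurableSpace Ω} (hm : m ≤ mΩ) (hm' : m' ≤ mΩ)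
    [SigmaFinite (μ.trim hm)] [SigmaFinite (μ.trim hm')] :
    IsClosed {f : Ω →₁[μ] ℝ | μ[f|m] =ᵐ[μ] μ[f|m']} := by
  have h (n : MeasurableSpace Ω) (hn : n ≤ mΩ) [SigmaFinite (μ.trim hn)] (f : Ω →₁[μ] ℝ) :
      μ[f|n] =ᵐ[μ] condExpL1CLM ℝ hn μ f := by
    simpa only [Integrable.toL1_coeFn] using
      condExp_ae_eq_condExpL1CLM hn (L1.integrable_coeFn f)
  have hset : {f : Ω →₁[μ] ℝ | μ[f|m] =ᵐ[μ] μ[f|m']}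
      = {f | condExpL1CLM ℝ hm μ f = condExpL1CLM ℝ hm' μ f} := by
    ext f
    rw [mem_ofPred_eq, mem_ofPred_eq, Lp.ext_iff]
    exact ⟨fun hf => (h m hm f).symm.trans (hf.trans (h m' hm' f)),
      fun hf => (h m hm f).trans (hf.trans (h m' hm' f).symm)⟩
  rw [hset]
  exact isClosed_eq (condExpL1CLM ℝ hm μ).continuous (condExpL1CLM ℝ hm' μ).continuous

end CondExp

section CondIndep

variable {Ω : Type*} {m m₁ m₂ mΩ : MeasurableSpace Ω} [StandardBorelSpace Ω] {μ : Measure Ω}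
  [IsFiniteMeasure μ]

theorem condExp_indicator_sup_ae_eq_of_condIndep (hm : m ≤ mΩ) (hm₁ : m₁ ≤ mΩ) (hm₂ : m₂ ≤ mΩ)
    (h : CondIndep m m₁ m₂ hm μ) {A : Set Ω} (hA : MeasurableSet[m₁] A) :
    μ⟦A | m₂ ⊔ m⟧ =ᵐ[μ] μ⟦A | m⟧ := by
  have hA₀ : MeasurableSet A := hm₁ A hA
  have hsup : m₂ ⊔ m ≤ mΩ := sup_le hm₂ hm
  refine (ae_eq_condExp_of_forall_setIntegral_eq hsup ((integrable_const 1).indicator hA₀)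
    (fun s _ _ => integrable_condExp.integrableOn) (fun s hs _ => ?_)
    (stronglyMeasurable_condExp.mono (le_sup_right : m ≤ m₂ ⊔ m)).aestronglyMeasurable).symm
  refine setIntegral_eq_of_isPiSystem hsup (sup_eq_generateFrom_inter m₂ m)
    (isPiSystem_inter_measurableSet m₂ m) integrable_condExp
    ((integrable_const 1).indicator hA₀) (integral_condExp hm) ?_ hs
  rintro _ ⟨T, B, hT, hB, rfl⟩
  have hT₀ : MeasurableSet T := hm₂ T hT
  have hprod := (condIndep_iff m m₁ m₂ hm hm₁ hm₂ μ).1 h A T hA hT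
  have hind : ∀ f : Ω → ℝ, T.indicator f = fun ω => f ω * T.indicator (fun _ => 1) ω := by
    intro f; ext ω; by_cases hω : ω ∈ T <;> simp [hω]
  have hint : Integrable (fun ω => (μ⟦A | m⟧) ω * T.indicator (fun _ => 1) ω) μ := by
    rw [← hind]; exact integrable_condExp.indicator hT₀
  calc ∫ ω in T ∩ B, (μ⟦A | m⟧) ω ∂μ
      = ∫ ω in B, (μ⟦A | m⟧) ω * T.indicator (fun _ => 1) ω ∂μ := by
        rw [← hind, setIntegral_indicator hT₀, inter_comm]
    _ = ∫ ω in B, μ[fun ω => (μ⟦A | m⟧) ω * T.indicator (fun _ => 1) ω | m] ω ∂μ :=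
        (setIntegral_condExp hm hint hB).symm
    _ = ∫ ω in B, (μ⟦A ∩ T | m⟧) ω ∂μ := by
        refine setIntegral_congr_ae (hm B hB) ?_
        filter_upwards [condExp_mul_of_stronglyMeasurable_left stronglyMeasurable_condExp hint
          ((integrable_const 1).indicator hT₀), hprod] with ω h1 h2 _
        exact h1.trans h2.symm
    _ = ∫ ω in T ∩ B, A.indicator (fun _ => 1) ω ∂μ := by
        rw [setIntegral_condExp hm ((integrable_const 1).indicator (hA₀.inter hT₀)) hB,
          setIntegral_indicator (hA₀.inter hT₀), setIntegral_indicator hA₀]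
        congr 2; ext; simp only [mem_inter_iff]; tauto

theorem condExp_sup_ae_eq_of_condIndep (hm : m ≤ mΩ) (hm₁ : m₁ ≤ mΩ) (hm₂ : m₂ ≤ mΩ)
    (h : CondIndep m m₁ m₂ hm μ) {g : Ω → ℝ} (hg : AEStronglyMeasurable[m₁] g μ)
    (hgi : Integrable g μ) :
    μ[g | m₂ ⊔ m] =ᵐ[μ] μ[g | m] := by
  refine MemLp.induction_stronglyMeasurable hm₁ ENNReal.one_ne_top
    (fun g => μ[g | m₂ ⊔ m] =ᵐ[μ] μ[g | m]) ?_ ?_ ?_ ?_ (memLp_one_iff_integrable.2 hgi) hg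
  · intro c s hs _
    have hsmul : s.indicator (fun _ => c) = c • s.indicator (fun _ => (1 : ℝ)) := by
      ext ω; by_cases hω : ω ∈ s <;> simp [hω]
    rw [hsmul]
    exact (condExp_smul c _ _).trans
      (((condExp_indicator_sup_ae_eq_of_condIndep hm hm₁ hm₂ h hs).const_smul c).trans
        (condExp_smul c _ _).symm)
  · intro f g _ hf hg _ _ hfP hgP
    rw [memLp_one_iff_integrable] at hf hg
    exact (condExp_add hf hg _).trans ((hfP.add hgP).trans (condExp_add hf hg _).symm)
  · exact (isClosed_setOf_condExp_ae_eq (sup_le hm₂ hm) hm).preimage continuous_subtype_val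
  · intro f g hfg _ hf
    exact (condExp_congr_ae hfg).symm.trans (hf.trans (condExp_congr_ae hfg))

theorem ProbabilityTheory.CondIndepFun.integral_mul_eq_integral_condExp_mul_condExp
    {β : Type*} [mβ : MeasurableSpace β] (hm : m ≤ mΩ) {Y : Ω → ℝ} {X : Ω → β}
    (hY : Measurable Y) (hX : Measurable X) (h : CondIndepFun m hm Y X μ) {Z : Ω → ℝ}
    (hZ : StronglyMeasurable[mβ.comap X ⊔ m] Z) (hY2 : MemLp Y 2 μ) (hZ2 : MemLp Z 2 μ) :
    ∫ ω, Y ω * Z ω ∂μ = ∫ ω, μ[Y|m] ω * μ[Z|m] ω ∂μ := by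
  have hsup : μ[Y | mβ.comap X ⊔ m] =ᵐ[μ] μ[Y | m] :=
    condExp_sup_ae_eq_of_condIndep hm hY.comap_le hX.comap_le
      ((condIndepFun_iff_condIndep m hm Y X μ).1 h)
      (comap_measurable Y).stronglyMeasurable.aestronglyMeasurable (hY2.integrable one_le_two)
  calc ∫ ω, Y ω * Z ω ∂μ = ∫ ω, μ[Y | mβ.comap X ⊔ m] ω * Z ω ∂μ :=
        (integral_condExp_mul_of_stronglyMeasurable (sup_le hX.comap_le hm) hZ
          (hY2.integrable_mul hZ2) (hY2.integrable one_le_two)).symm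
    _ = ∫ ω, μ[Y|m] ω * Z ω ∂μ := integral_congr_ae (hsup.mul Filter.EventuallyEq.rfl)
    _ = ∫ ω, μ[Y|m] ω * μ[Z|m] ω ∂μ := by
        simp_rw [mul_comm (μ[Y|m] _)]
        exact (integral_condExp_mul_of_stronglyMeasurable hm stronglyMeasurable_condExp
          (hZ2.integrable_mul (hY2.condExp one_le_two)) (hZ2.integrable one_le_two)).symm

end CondIndep

section Law

variable {Ω β γ : Type*} {mΩ : MeasurableSpace Ω} [MeasurableSpace β] [mγ : MeasurableSpace γ]
  {μ : Measure Ω} {U U' : Ω → β} {V : Ω → γ} {h : β × γ → ℝ}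

lemma setIntegral_preimage_eq_of_map_eq (hU : Measurable U) (hU' : Measurable U')
    (hV : Measurable V) (hlaw : μ.map (fun ω => (U ω, V ω)) = μ.map (fun ω => (U' ω, V ω)))
    (hh : Measurable h) {B : Set γ} (hB : MeasurableSet B) :
    ∫ ω in V ⁻¹' B, h (U ω, V ω) ∂μ = ∫ ω in V ⁻¹' B, h (U' ω, V ω) ∂μ := by
  have hmap (W : Ω → β) (hW : Measurable W) : ∫ ω in V ⁻¹' B, h (W ω, V ω) ∂μ
      = ∫ p in Prod.snd ⁻¹' B, h p ∂(μ.map (fun ω => (W ω, V ω))) :=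
    (setIntegral_map (measurable_snd hB) hh.aestronglyMeasurable (hW.prodMk hV).aemeasurable).symm
  rw [hmap U hU, hmap U' hU', hlaw]

lemma condExp_comp_ae_eq_of_map_eq [IsFiniteMeasure μ] (hU : Measurable U) (hU' : Measurable U')
    (hV : Measurable V) (hlaw : μ.map (fun ω => (U ω, V ω)) = μ.map (fun ω => (U' ω, V ω)))
    (hh : Measurable h) (hi : Integrable (fun ω => h (U ω, V ω)) μ) :
    μ[fun ω => h (U ω, V ω) | mγ.comap V] =ᵐ[μ] μ[fun ω => h (U' ω, V ω) | mγ.comap V] := by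
  have hmap (W : Ω → β) (hW : Measurable W) :
      Integrable h (μ.map (fun ω => (W ω, V ω))) ↔ Integrable (fun ω => h (W ω, V ω)) μ :=
    integrable_map_measure hh.aestronglyMeasurable (hW.prodMk hV).aemeasurable
  have hi' : Integrable (fun ω => h (U' ω, V ω)) μ :=
    (hmap U' hU').1 (hlaw ▸ (hmap U hU).2 hi)
  refine ae_eq_condExp_of_forall_setIntegral_eq hV.comap_le hi'
    (fun s _ _ => integrable_condExp.integrableOn) ?_
    stronglyMeasurable_condExp.aestronglyMeasurable
  rintro _ ⟨B, hB, rfl⟩ -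
  rw [setIntegral_condExp hV.comap_le hi ⟨B, hB, rfl⟩,
    setIntegral_preimage_eq_of_map_eq hU hU' hV hlaw hh hB]

end Law

section L2

variable {Ω : Type*} {m mΩ : MeasurableSpace Ω} {μ : Measure Ω} {U V : Ω → ℝ}

lemma integral_sub_sq (hU : MemLp U 2 μ) (hV : MemLp V 2 μ) :
    ∫ ω, (U ω - V ω) ^ 2 ∂μ
      = ∫ ω, U ω ^ 2 ∂μ - 2 * ∫ ω, U ω * V ω ∂μ + ∫ ω, V ω ^ 2 ∂μ := by
  have hUV : Integrable (fun ω => 2 * (U ω * V ω)) μ := (hU.integrable_mul hV).const_mul 2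
  have hsub : Integrable (fun ω => U ω ^ 2 - 2 * (U ω * V ω)) μ := hU.integrable_sq.sub hUV
  simp_rw [sub_sq, mul_assoc]
  rw [integral_add hsub hV.integrable_sq, integral_sub hU.integrable_sq hUV, integral_const_mul]

lemma integrable_condExp_mul_sub_mul (hU : MemLp U 2 μ) (hV : MemLp V 2 μ) :
    Integrable (fun ω => μ[fun ω => U ω * V ω|m] ω - μ[U|m] ω * μ[V|m] ω) μ :=
  integrable_condExp.sub ((hU.condExp one_le_two).integrable_mul (hV.condExp one_le_two))

lemma integral_condExp_mul_sub_mul (hm : m ≤ mΩ) [SigmaFinite (μ.trim hm)] (hU : MemLp U 2 μ)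
    (hV : MemLp V 2 μ) :
    ∫ ω, (μ[fun ω => U ω * V ω|m] ω - μ[U|m] ω * μ[V|m] ω) ∂μ
      = ∫ ω, U ω * V ω ∂μ - ∫ ω, μ[U|m] ω * μ[V|m] ω ∂μ := by
  have hprod : Integrable (fun ω => μ[U|m] ω * μ[V|m] ω) μ :=
    (hU.condExp one_le_two).integrable_mul (hV.condExp one_le_two)
  rw [integral_sub integrable_condExp hprod, integral_condExp hm]

end L2

section PFI

variable {Ω S C : Type*} [MeasurableSpace Ω] [MeasurableSpace S] [mC : MeasurableSpace C]

noncomputable def pfi (P : Measure Ω) (Y : Ω → ℝ) (XS XtS : Ω → S) (XC : Ω → C)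
    (g : S × C → ℝ) : ℝ :=
  ∫ ω, (Y ω - g (XtS ω, XC ω)) ^ 2 ∂P - ∫ ω, (Y ω - g (XS ω, XC ω)) ^ 2 ∂P

theorem pfi_eq [StandardBorelSpace Ω] {P : Measure Ω} [IsFiniteMeasure P] {XS XtS : Ω → S}
    {XC : Ω → C} (hXS : Measurable XS) (hXC : Measurable XC) (hXtS : Measurable XtS)
    {Y : Ω → ℝ} (hYmeas : Measurable Y) (hY : MemLp Y 2 P) {f : S × C → ℝ}
    (hreg : (fun ω => f (XS ω, XC ω))
      =ᵐ[P] P[Y|MeasurableSpace.comap (fun ω => (XS ω, XC ω)) inferInstance])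
    (hlaw : Measure.map (fun ω => (XtS ω, XC ω)) P = Measure.map (fun ω => (XS ω, XC ω)) P)
    (hCondIndep : CondIndepFun (mC.comap XC) hXC.comap_le Y XtS P)
    {g : S × C → ℝ} (hg : Measurable g) (hgX : MemLp (fun ω => g (XS ω, XC ω)) 2 P)
    (hgXt : MemLp (fun ω => g (XtS ω, XC ω)) 2 P) :
    pfi P Y XS XtS XC g = 2 * (∫ ω, f (XS ω, XC ω) * g (XS ω, XC ω) ∂P
      - ∫ ω, P[fun ω => f (XS ω, XC ω)|mC.comap XC] ω
          * P[fun ω => g (XS ω, XC ω)|mC.comap XC] ω ∂P) := by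
  have hX : Measurable (fun ω => (XS ω, XC ω)) := hXS.prodMk hXC
  have hobserved : ∫ ω, Y ω * g (XS ω, XC ω) ∂P = ∫ ω, f (XS ω, XC ω) * g (XS ω, XC ω) ∂P := by
    rw [← integral_condExp_mul_of_stronglyMeasurable hX.comap_le (Z := fun ω => g (XS ω, XC ω))
      (hg.comp (comap_measurable _)).stronglyMeasurable (hY.integrable_mul hgX)
      (hY.integrable one_le_two)]
    exact integral_congr_ae (hreg.symm.mul Filter.EventuallyEq.rfl)
  have hreplaced : ∫ ω, Y ω * g (XtS ω, XC ω) ∂P = ∫ ω, P[fun ω => f (XS ω, XC ω)|mC.comap XC] ω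
      * P[fun ω => g (XS ω, XC ω)|mC.comap XC] ω ∂P := by
    have hgXt_meas : StronglyMeasurable[MeasurableSpace.comap XtS inferInstance ⊔ mC.comap XC]
        (fun ω => g (XtS ω, XC ω)) :=
      (hg.comp (((comap_measurable XtS).mono le_sup_left le_rfl).prodMk
        ((comap_measurable XC).mono le_sup_right le_rfl))).stronglyMeasurable
    have htower : P[Y|mC.comap XC] =ᵐ[P] P[fun ω => f (XS ω, XC ω)|mC.comap XC] :=
      (condExp_condExp_of_le (measurable_snd.comp (comap_measurable _)).comap_le
        hX.comap_le).symm.trans (condExp_congr_ae hreg.symm)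
    rw [hCondIndep.integral_mul_eq_integral_condExp_mul_condExp hXC.comap_le hYmeas hXtS
      hgXt_meas hY hgXt]
    exact integral_congr_ae (htower.mul (condExp_comp_ae_eq_of_map_eq hXtS hXS hXC hlaw hg
      (hgXt.integrable one_le_two)))
  have hsquare : ∫ ω, g (XtS ω, XC ω) ^ 2 ∂P = ∫ ω, g (XS ω, XC ω) ^ 2 ∂P := by
    simpa using setIntegral_preimage_eq_of_map_eq hXtS hXS hXC hlaw (hg.pow_const 2)
      MeasurableSet.univ
  rw [pfi, integral_sub_sq hY hgXt, integral_sub_sq hY hgX, hobserved, hreplaced, hsquare]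
  ring

end PFI

/-- **Conditional DGP-PFI minus conditional model-PFI (L2 loss).** Let `f̂` be a fixed
measurable model, `f ∘ X` a version of `E[Y | σ(X_S,X_C)]`, `(X̃_S, X_C)` with the same joint
law as `(X_S, X_C)`, and `Y`, `X̃_S` conditionally independent given `σ(X_C)`. Then, with
`PFI_g = E[(Y − g(X̃_S,X_C))²] − E[(Y − g(X_S,X_C))²]`,
`PFI_f − PFI_f̂ = 2 E[Var_{X_S|X_C}[f] − Cov_{X_S|X_C}[f, f̂]]`, where the conditional
variance and covariance are expressed via conditional expectations given `σ(X_C)`. -/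
theorem stmt_12
    {Ω S C : Type*} [MeasurableSpace Ω] [StandardBorelSpace Ω]
    [MeasurableSpace S] [MeasurableSpace C]
    (P : Measure Ω) [IsProbabilityMeasure P]
    (XS : Ω → S) (XC : Ω → C) (XtS : Ω → S)
    (hXS : Measurable XS) (hXC : Measurable XC) (hXtS : Measurable XtS)
    (Y : Ω → ℝ) (hYmeas : Measurable Y) (hY : MemLp Y 2 P)
    (f : S × C → ℝ) (hf : Measurable f)
    (fhat : S × C → ℝ) (hfhat : Measurable fhat)
    (hfX2 : MemLp (fun ω => f (XS ω, XC ω)) 2 P)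
    (hfhatX2 : MemLp (fun ω => fhat (XS ω, XC ω)) 2 P)
    (hfXt2 : MemLp (fun ω => f (XtS ω, XC ω)) 2 P)
    (hfhatXt2 : MemLp (fun ω => fhat (XtS ω, XC ω)) 2 P)
    (hreg : (fun ω => f (XS ω, XC ω))
      =ᵐ[P] P[Y|MeasurableSpace.comap (fun ω => (XS ω, XC ω)) inferInstance])
    (hlaw : Measure.map (fun ω => (XtS ω, XC ω)) P
      = Measure.map (fun ω => (XS ω, XC ω)) P)
    (hCondIndep : CondIndepFun (MeasurableSpace.comap XC inferInstance)
      hXC.comap_le Y XtS P) :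
    ((∫ ω, (Y ω - f (XtS ω, XC ω)) ^ 2 ∂P) - (∫ ω, (Y ω - f (XS ω, XC ω)) ^ 2 ∂P))
      - ((∫ ω, (Y ω - fhat (XtS ω, XC ω)) ^ 2 ∂P)
          - (∫ ω, (Y ω - fhat (XS ω, XC ω)) ^ 2 ∂P))
      = 2 * ∫ ω,
          (((P[fun ω' => (f (XS ω', XC ω')) ^ 2|MeasurableSpace.comap XC inferInstance]) ω
              - ((P[fun ω' => f (XS ω', XC ω')|MeasurableSpace.comap XC inferInstance]) ω) ^ 2)
            - ((P[fun ω' => f (XS ω', XC ω') * fhat (XS ω', XC ω')|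
                  MeasurableSpace.comap XC inferInstance]) ω
              - ((P[fun ω' => f (XS ω', XC ω')|MeasurableSpace.comap XC inferInstance]) ω)
                * ((P[fun ω' => fhat (XS ω', XC ω')|
                    MeasurableSpace.comap XC inferInstance]) ω))) ∂P := by
  change pfi P Y XS XtS XC f - pfi P Y XS XtS XC fhat = _
  rw [pfi_eq hXS hXC hXtS hYmeas hY hreg hlaw hCondIndep hf hfX2 hfXt2,
    pfi_eq hXS hXC hXtS hYmeas hY hreg hlaw hCondIndep hfhat hfhatX2 hfhatXt2]
  simp only [sq]
  rw [integral_sub (integrable_condExp_mul_sub_mul hfX2 hfX2)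
      (integrable_condExp_mul_sub_mul hfX2 hfhatX2),
    integral_condExp_mul_sub_mul hXC.comap_le hfX2 hfX2,
    integral_condExp_mul_sub_mul hXC.comap_le hfX2 hfhatX2]
  ring
end
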